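/- arXiv:0805.3672 — 3 statements merged into one kernel-verified Lean document; each statement's English description precedes it below -/
import Mathlib

section
/- A linear idempotent map P on the polynomial ring C[x_1,...,x_d] has kernel an ideal if and only if P(gh) = P(g·P(h)) for all polynomials g and h. -/
namespace LinearMap

variable {R A : Type*} [Semiring R] [Ring A] [Module R A]

theorem map_mul_eq_map_mul_map_of_ker_mul_closed {P : A →ₗ[R] A} (hidem : P ∘ₗ P = P)
    (hker : ∀ g h : A, P h = 0 → P (g * h) = 0) (g h : A) : P (g * h) = P (g * P h) := by
  have hres : P (h - P h) = 0 := by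
    rw [map_sub, ← comp_apply, hidem, sub_self]
  rw [← sub_eq_zero, ← map_sub, ← mul_sub]
  exact hker g _ hres

theorem map_mul_eq_zero_of_map_eq_zero {P : A →ₗ[R] A}
    (hform : ∀ g h : A, P (g * h) = P (g * P h)) {g h : A} (hh : P h = 0) :
    P (g * h) = 0 := by
  rw [hform, hh, mul_zero, map_zero]

end LinearMap

/-- de Boor's formula: a linear idempotent map `P` on `ℂ[x₁,…,x_d]` has kernel an ideal
(i.e. the kernel is closed under multiplication by arbitrary polynomials) if and only if
`P (g * h) = P (g * P h)` for all polynomials `g h`. -/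
theorem stmt_0 (d : ℕ)
    (P : MvPolynomial (Fin d) ℂ →ₗ[ℂ] MvPolynomial (Fin d) ℂ)
    (hidem : P ∘ₗ P = P) :
    (∀ g h : MvPolynomial (Fin d) ℂ, P h = 0 → P (g * h) = 0) ↔
      ∀ g h : MvPolynomial (Fin d) ℂ, P (g * h) = P (g * P h) :=
  ⟨LinearMap.map_mul_eq_map_mul_map_of_ker_mul_closed hidem,
    fun hform _ _ => LinearMap.map_mul_eq_zero_of_map_eq_zero hform⟩
end

section
/- If P_1 and P_2 are two ideal projectors from C[x_1,...,x_d] onto the span of {1, x_1, ..., x_d} satisfying P_1(x_i x_j) = P_2(x_i x_j) for all 1 ≤ i, j ≤ d, then P_1 = P_2. -/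
/-!
An ideal projector `P` satisfies `P (g * p) = P (g * P p)`, because `p - P p` lies in the ideal
`ker P`. Hence, by induction on monomials, `P (X i * p) = P (X i * P p)` determines `P` from its
values on `1` and on `X i * range P`. When the range is spanned by `1` and the variables, the
products `X i * s` are combinations of the `X i`, which both projectors fix, and of the
`X i * X j`, where they agree by hypothesis.
-/

open MvPolynomial

structure IsIdealProjector {R A : Type*} [CommSemiring R] [Semiring A] [Module R A]
    (P : A →ₗ[R] A) : Prop where
  isIdempotentElem : IsIdempotentElem P
  apply_mul_eq_zero : ∀ g h : A, P h = 0 → P (g * h) = 0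

namespace IsIdealProjector

theorem apply_mul_apply {R A : Type*} [CommSemiring R] [Ring A] [Module R A]
    {P : A →ₗ[R] A} (hP : IsIdealProjector P) (g p : A) : P (g * P p) = P (g * p) := by
  have hsub : P (p - P p) = 0 := by
    rw [map_sub, ← Module.End.mul_apply, hP.isIdempotentElem.eq, sub_self]
  have := hP.apply_mul_eq_zero g _ hsub
  rwa [mul_sub, map_sub, sub_eq_zero, eq_comm] at this

theorem ext_of_apply_X_mul {R σ : Type*} [CommRing R]
    {P₁ P₂ : MvPolynomial σ R →ₗ[R] MvPolynomial σ R}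
    (hP₁ : IsIdealProjector P₁) (hP₂ : IsIdealProjector P₂) (h_one : P₁ 1 = P₂ 1)
    (h_X_mul : ∀ i, ∀ s ∈ LinearMap.range P₂, P₁ (X i * s) = P₂ (X i * s)) :
    P₁ = P₂ := by
  refine LinearMap.ext fun p => ?_
  induction p using MvPolynomial.induction_on with
  | C a => rw [C_eq_smul_one, map_smul, map_smul, h_one]
  | add p q hp hq => rw [map_add, map_add, hp, hq]
  | mul_X p i hp =>
    rw [mul_comm, ← hP₁.apply_mul_apply, ← hP₂.apply_mul_apply, hp]
    exact h_X_mul i _ (LinearMap.mem_range_self P₂ p)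

end IsIdealProjector

/-- Two ideal projectors from `ℂ[x₁,…,x_d]` onto the span of `{1, x₁, …, x_d}` which agree on
all products `x_i x_j` are equal. -/
theorem stmt_2 (d : ℕ)
    (P₁ P₂ : MvPolynomial (Fin d) ℂ →ₗ[ℂ] MvPolynomial (Fin d) ℂ)
    (hidem₁ : P₁ ∘ₗ P₁ = P₁) (hidem₂ : P₂ ∘ₗ P₂ = P₂)
    (hker₁ : ∀ g h : MvPolynomial (Fin d) ℂ, P₁ h = 0 → P₁ (g * h) = 0)
    (hker₂ : ∀ g h : MvPolynomial (Fin d) ℂ, P₂ h = 0 → P₂ (g * h) = 0)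
    (hrange₁ : LinearMap.range P₁ =
      Submodule.span ℂ ({1} ∪ Set.range (X : Fin d → MvPolynomial (Fin d) ℂ)))
    (hrange₂ : LinearMap.range P₂ =
      Submodule.span ℂ ({1} ∪ Set.range (X : Fin d → MvPolynomial (Fin d) ℂ)))
    (hagree : ∀ i j : Fin d, P₁ (X i * X j) = P₂ (X i * X j)) :
    P₁ = P₂ := by
  set S := Submodule.span ℂ ({1} ∪ Set.range (X : Fin d → MvPolynomial (Fin d) ℂ))
  have h_one_mem : (1 : MvPolynomial (Fin d) ℂ) ∈ S := Submodule.subset_span (Or.inl rfl)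
  have h_X_mem : ∀ i, X i ∈ S := fun i => Submodule.subset_span (Or.inr ⟨i, rfl⟩)
  have fix₁ : ∀ s ∈ S, P₁ s = s := fun s hs =>
    (LinearMap.IsIdempotentElem.mem_range_iff hidem₁).1 (hrange₁ ▸ hs)
  have fix₂ : ∀ s ∈ S, P₂ s = s := fun s hs =>
    (LinearMap.IsIdempotentElem.mem_range_iff hidem₂).1 (hrange₂ ▸ hs)
  refine IsIdealProjector.ext_of_apply_X_mul ⟨hidem₁, hker₁⟩ ⟨hidem₂, hker₂⟩
    (by rw [fix₁ 1 h_one_mem, fix₂ 1 h_one_mem]) fun i s hs => ?_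
  rw [hrange₂] at hs
  refine LinearMap.eqOn_span (f := P₁ ∘ₗ LinearMap.mulLeft ℂ (X i))
    (g := P₂ ∘ₗ LinearMap.mulLeft ℂ (X i)) ?_ hs
  rintro _ (rfl | ⟨j, rfl⟩)
  · simp only [LinearMap.comp_apply, LinearMap.mulLeft_apply, mul_one]
    rw [fix₁ _ (h_X_mem i), fix₂ _ (h_X_mem i)]
  · exact hagree i j
end

section
/- The element C(0;j,(i,k)) = Σ_{m=1}^d (p_{m,ij} p_{0,km} − p_{m,kj} p_{0,im}) lies in the ideal generated by the elements C(a;b,(e,f)) with 1 ≤ a,b,e,f ≤ d, where for a ∉ {e,f,b}, C(a;b,(e,f)) = Σ_{m} (p_{m,eb} p_{a,fm} − p_{m,fb} p_{a,em}), and appropriate linear terms p_{0,··} are included when a ∈ {e,f,b}. -/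
open MvPolynomial

variable {A : Type} [CommRing A]

/-- `P(x_i x_j) = p_{0,ij} + ∑_m p_{m,ij} x_m`, as a polynomial in `x₁,…,x_d` with
coefficients in the ring `A` containing the (symmetric) elements `p₀`, `p`. -/
noncomputable def PXX (d : ℕ) (p0 : Fin d → Fin d → A) (p : Fin d → Fin d → Fin d → A)
    (i j : Fin d) : MvPolynomial (Fin d) A :=
  C (p0 i j) + ∑ m : Fin d, C (p m i j) * X m

/-- `P(x_k · q)` for a polynomial `q` of degree at most one: `P` fixes constants and the `x_m`,
and sends `x_k x_m` to `P(x_k x_m)`. -/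
noncomputable def Papp (d : ℕ) (p0 : Fin d → Fin d → A) (p : Fin d → Fin d → Fin d → A)
    (k : Fin d) (q : MvPolynomial (Fin d) A) : MvPolynomial (Fin d) A :=
  C (q.coeff 0) * X k + ∑ m : Fin d, C (q.coeff (Finsupp.single m 1)) * PXX d p0 p k m

/-- The polynomial `P(x_k P(x_i x_j)) − P(x_i P(x_k x_j))`. -/
noncomputable def Dpoly (d : ℕ) (p0 : Fin d → Fin d → A) (p : Fin d → Fin d → Fin d → A)
    (j i k : Fin d) : MvPolynomial (Fin d) A :=
  Papp d p0 p k (PXX d p0 p i j) - Papp d p0 p i (PXX d p0 p k j)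

/-- `C(a;j,(i,k))`, the coefficient of `x_a` in `P(x_k P(x_i x_j)) − P(x_i P(x_k x_j))`. -/
noncomputable def Ccoef (d : ℕ) (p0 : Fin d → Fin d → A) (p : Fin d → Fin d → Fin d → A)
    (a j i k : Fin d) : A :=
  (Dpoly d p0 p j i k).coeff (Finsupp.single a 1)

/-- `C(0;j,(i,k))`, the constant coefficient of `P(x_k P(x_i x_j)) − P(x_i P(x_k x_j))`. -/
noncomputable def Cconst (d : ℕ) (p0 : Fin d → Fin d → A) (p : Fin d → Fin d → Fin d → A)
    (j i k : Fin d) : A :=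
  (Dpoly d p0 p j i k).coeff 0

/-!
If `i = k`, then `C(0;j,(i,k))` vanishes identically. Otherwise, for any `l ≠ i`, there is an
explicit combination of the `C(a;·,(·,·))` with coefficients among the `p_{r,st}` whose part
linear in `p₀` is exactly `C(0;j,(i,k))`, and whose cubic terms in `p` cancel in five pairs: each
pair is one double sum written twice, with the summation indices exchanged and the symmetry
`p_{r,st} = p_{r,ts}` applied.
-/

theorem sum_sum_eq_of_swap {ι M : Type*} [Fintype ι] [AddCommMonoid M]
    {f g : ι → ι → M} (h : ∀ m n, f m n = g n m) : ∑ m, ∑ n, f m n = ∑ m, ∑ n, g m n := by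
  simp_rw [h]
  exact Finset.sum_comm

section
variable (d : ℕ) (p0 : Fin d → Fin d → A) (p : Fin d → Fin d → Fin d → A)

theorem coeff_zero_PXX (i j : Fin d) : (PXX d p0 p i j).coeff 0 = p0 i j := by
  simp [PXX, coeff_sum, coeff_C_mul]

theorem coeff_single_PXX (i j a : Fin d) :
    (PXX d p0 p i j).coeff (Finsupp.single a 1) = p a i j := by
  have h0 : (0 : Fin d →₀ ℕ) ≠ Finsupp.single a 1 := (Finsupp.single_ne_zero.2 one_ne_zero).symm
  simp [PXX, coeff_sum, coeff_C_mul, coeff_X, coeff_C, Finsupp.single_eq_single_iff, h0]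

theorem Cconst_eq_sum (j i k : Fin d) :
    Cconst d p0 p j i k = ∑ m, p m i j * p0 k m - ∑ m, p m k j * p0 i m := by
  simp [Cconst, Dpoly, Papp, coeff_sum, coeff_C_mul, coeff_zero_PXX, coeff_single_PXX]

theorem Cconst_self (j i : Fin d) : Cconst d p0 p j i i = 0 := by
  rw [Cconst_eq_sum, sub_self]

theorem Ccoef_eq_sum (a b e f : Fin d) :
    Ccoef d p0 p a b e f =
      (if a = f then p0 e b else 0) - (if a = e then p0 f b else 0)
        + ∑ m, (p m e b * p a f m - p m f b * p a e m) := by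
  simp [Ccoef, Dpoly, Papp, coeff_sum, coeff_C_mul, coeff_zero_PXX, coeff_single_PXX,
    coeff_X, Finsupp.single_eq_single_iff, Finset.sum_sub_distrib, eq_comm (b := a)]
  ring

theorem Cconst_eq_sum_mul_Ccoef (hp0 : ∀ i j, p0 i j = p0 j i) (hp : ∀ r s t, p r s t = p r t s)
    (j i k l : Fin d) (hl : l ≠ i) :
    Cconst d p0 p j i k =
      ∑ m, p m i j * Ccoef d p0 p l k m l
    - ∑ m, p m j k * Ccoef d p0 p l m i l
    + ∑ m, p m k l * Ccoef d p0 p l j i m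
    - ∑ a, p l i a * Ccoef d p0 p a k j l
    - ∑ a, p l a l * Ccoef d p0 p a j i k := by
  simp only [Ccoef_eq_sum, Cconst_eq_sum, if_neg hl, mul_add, mul_sub, mul_ite, mul_zero,
    Finset.mul_sum, Finset.sum_add_distrib, Finset.sum_sub_distrib, Finset.sum_ite_eq,
    Finset.sum_ite_eq', Finset.mem_univ, if_true, sub_zero]
  -- `pairᵤᵥ` matches a cubic double sum of the `u`-th summand with one of the `v`-th.
  have pair₁₅ : ∑ m, ∑ n, p m i j * (p n m k * p l l n)
      = ∑ m, ∑ n, p l m l * (p n i j * p m k n) :=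
    sum_sum_eq_of_swap fun m n => by rw [hp n m k, hp l l n]; ring
  have pair₁₃ : ∑ m, ∑ n, p m i j * (p n l k * p l m n)
      = ∑ m, ∑ n, p m k l * (p n i j * p l m n) :=
    sum_sum_eq_of_swap fun m n => by rw [hp n l k, hp l m n]; ring
  have pair₂₅ : ∑ m, ∑ n, p m j k * (p n i m * p l l n)
      = ∑ m, ∑ n, p l m l * (p n k j * p m i n) :=
    sum_sum_eq_of_swap fun m n => by rw [hp m j k, hp l l n]; ring
  have pair₂₄ : ∑ m, ∑ n, p m j k * (p n l m * p l i n)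
      = ∑ m, ∑ n, p l i m * (p n j k * p m l n) :=
    sum_sum_eq_of_swap fun m n => by ring
  have pair₃₄ : ∑ m, ∑ n, p m k l * (p n m j * p l i n)
      = ∑ m, ∑ n, p l i m * (p n l k * p m j n) :=
    sum_sum_eq_of_swap fun m n => by rw [hp m k l, hp n m j]; ring
  have sum_p0_symm : ∑ m, p m i j * p0 m k = ∑ m, p m i j * p0 k m := by simp_rw [hp0 _ k]
  have sum_p_symm : ∑ m, p m j k * p0 i m = ∑ m, p m k j * p0 i m := by simp_rw [hp _ j k]
  linear_combination pair₁₃ + pair₂₅ - pair₁₅ - pair₂₄ + pair₃₄ - sum_p0_symm + sum_p_symm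
    - p l i l * hp0 k j

end

/-- Each constant-term coefficient `C(0;j,(i,k))` lies in the ideal generated by the
coefficients `C(a;b,(e,f))` of the `x_a` with `1 ≤ a ≤ d`. -/
theorem stmt_9 (d : ℕ) (p0 : Fin d → Fin d → A) (p : Fin d → Fin d → Fin d → A)
    (hp0 : ∀ i j, p0 i j = p0 j i) (hp : ∀ r s t, p r s t = p r t s)
    (j i k : Fin d) :
    Cconst d p0 p j i k ∈
      Ideal.span {x : A | ∃ a b e f : Fin d, x = Ccoef d p0 p a b e f} := by
  rcases eq_or_ne i k with rfl | hik
  · rw [Cconst_self]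
    exact Ideal.zero_mem _
  · rw [Cconst_eq_sum_mul_Ccoef d p0 p hp0 hp j i k k hik.symm]
    refine sub_mem (sub_mem (add_mem (sub_mem ?_ ?_) ?_) ?_) ?_ <;>
      exact Ideal.sum_mem _ fun _ _ => Ideal.mul_mem_left _ _ (Ideal.subset_span ⟨_, _, _, _, rfl⟩)
end
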